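/- arXiv:2605.20756 — 2 statements merged into one kernel-verified Lean document; each statement's English description precedes it below -/
import Mathlib

section
/- Let p_1, …, p_m be i.i.d. real random variables with mean p and variance σ², and let λ ∈ ℝ and δ > 0 be such that almost surely p_j + λ ≥ δ. Let p̄ = (1/m)Σ_j p_j. Then the uncorrected damped inverse is biased upward with bias of order 1/m: 0 ≤ E[1/(p̄ + λ)] − 1/(p + λ) ≤ σ² / (m · δ · (p + λ)²). -/
open MeasureTheory ProbabilityTheory

/-!
Write `B = p̄ + λ` and `a = E[B] = pm + λ`. The second-order expansion
`1/B = 1/a - (B - a)/a² + (B - a)²/(a² B)` is exact, and the linear term has mean zero, so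
`E[1/B] - 1/a = E[(B - a)²/(a² B)]`. This remainder is nonnegative, and since `B ≥ δ` it is at
most `Var(B)/(δ a²)`. Finally `Var(B) = Var(p̄) = σ²/m` by pairwise independence.
-/

lemma one_div_eq_one_div_sub_add_sq_div {a b : ℝ} (ha : a ≠ 0) (hb : b ≠ 0) :
    1 / b = 1 / a - (b - a) / a ^ 2 + (b - a) ^ 2 / (a ^ 2 * b) := by
  field_simp
  ring

lemma le_one_div_card_mul_sum {ι : Type*} [Fintype ι] [Nonempty ι] {x : ι → ℝ} {c : ℝ}
    (h : ∀ i, c ≤ x i) : c ≤ 1 / (Fintype.card ι : ℝ) * ∑ i, x i := by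
  rw [one_div_mul_eq_div, le_div_iff₀ (by positivity), mul_comm, ← nsmul_eq_mul]
  exact Finset.card_nsmul_le_sum _ _ _ fun i _ => h i

section SecondOrderJensen

variable {Ω : Type*} [MeasurableSpace Ω] {μ : Measure Ω} {X : Ω → ℝ} {δ : ℝ}

lemma memLp_two_of_integrable_sub_sq [IsFiniteMeasure μ] (hX : AEStronglyMeasurable X μ) {c : ℝ}
    (h : Integrable (fun ω => (X ω - c) ^ 2) μ) : MemLp X 2 μ := by
  have hc : MemLp (X - fun _ => c) 2 μ :=
    (memLp_two_iff_integrable_sq (hX.sub aestronglyMeasurable_const)).2 h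
  simpa using hc.add (memLp_const c)

lemma integrable_one_div_of_ae_le [IsFiniteMeasure μ] (hX : AEStronglyMeasurable X μ)
    (hδ : 0 < δ) (hXδ : ∀ᵐ ω ∂μ, δ ≤ X ω) : Integrable (fun ω => 1 / X ω) μ := by
  refine (integrable_const (1 / δ)).mono' (hX.aemeasurable.const_div 1).aestronglyMeasurable ?_
  filter_upwards [hXδ] with ω hω
  rw [Real.norm_eq_abs, abs_of_pos (one_div_pos.2 (hδ.trans_le hω))]
  exact one_div_le_one_div_of_le hδ hω

variable [IsProbabilityMeasure μ]

lemma le_integral_of_ae_le (hX : Integrable X μ) (hXδ : ∀ᵐ ω ∂μ, δ ≤ X ω) :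
    δ ≤ μ[X] := by
  simpa using integral_mono_ae (integrable_const δ) hX hXδ

lemma integral_one_div_sub_one_div_integral (hX : MemLp X 2 μ) (hδ : 0 < δ)
    (hXδ : ∀ᵐ ω ∂μ, δ ≤ X ω) :
    ∫ ω, 1 / X ω ∂μ - 1 / μ[X] = ∫ ω, (X ω - μ[X]) ^ 2 / (μ[X] ^ 2 * X ω) ∂μ := by
  set a := μ[X]
  have hXint : Integrable X μ := hX.integrable one_le_two
  have ha : a ≠ 0 := (hδ.trans_le (le_integral_of_ae_le hXint hXδ)).ne'
  have hremainder : (fun ω => (X ω - a) ^ 2 / (a ^ 2 * X ω))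
      =ᵐ[μ] fun ω => 1 / X ω - 1 / a + (X ω - a) / a ^ 2 := by
    filter_upwards [hXδ] with ω hω
    rw [one_div_eq_one_div_sub_add_sq_div ha (hδ.trans_le hω).ne']
    ring
  have hcentered : ∫ ω, (X ω - a) / a ^ 2 ∂μ = 0 := by
    simp [integral_div, integral_sub hXint (integrable_const a), a]
  have hinv := integrable_one_div_of_ae_le hX.1 hδ hXδ
  have hinv_sub : Integrable (fun ω => 1 / X ω - 1 / a) μ := hinv.sub (integrable_const _)
  have hlin : Integrable (fun ω => (X ω - a) / a ^ 2) μ :=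
    (hXint.sub (integrable_const a)).div_const _
  rw [integral_congr_ae hremainder, integral_add hinv_sub hlin,
    integral_sub hinv (integrable_const _), hcentered]
  simp

lemma one_div_integral_le_integral_one_div (hX : MemLp X 2 μ) (hδ : 0 < δ)
    (hXδ : ∀ᵐ ω ∂μ, δ ≤ X ω) : 1 / μ[X] ≤ ∫ ω, 1 / X ω ∂μ := by
  rw [← sub_nonneg, integral_one_div_sub_one_div_integral hX hδ hXδ]
  refine integral_nonneg_of_ae ?_
  filter_upwards [hXδ] with ω hω
  have := hδ.trans_le hω
  positivity

lemma integral_one_div_sub_one_div_integral_le (hX : MemLp X 2 μ) (hδ : 0 < δ)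
    (hXδ : ∀ᵐ ω ∂μ, δ ≤ X ω) :
    ∫ ω, 1 / X ω ∂μ - 1 / μ[X] ≤ Var[X; μ] / (δ * μ[X] ^ 2) := by
  set a := μ[X]
  have ha : 0 < a := hδ.trans_le (le_integral_of_ae_le (hX.integrable one_le_two) hXδ)
  have hsq : Integrable (fun ω => (X ω - a) ^ 2) μ := (hX.sub (memLp_const a)).integrable_sq
  rw [integral_one_div_sub_one_div_integral hX hδ hXδ, variance_eq_integral hX.1.aemeasurable,
    ← integral_div]
  refine integral_mono_of_nonneg ?_ (hsq.div_const _) ?_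
  · filter_upwards [hXδ] with ω hω
    have := hδ.trans_le hω
    positivity
  · filter_upwards [hXδ] with ω hω
    have := hδ.trans_le hω
    rw [mul_comm δ]
    gcongr

end SecondOrderJensen

section SampleMean

variable {Ω : Type*} [MeasurableSpace Ω] {μ : Measure Ω} {ι : Type*} [Fintype ι]
  {X : ι → Ω → ℝ}

lemma integral_sampleMean [Nonempty ι] (hX : ∀ i, Integrable (X i) μ) {c : ℝ}
    (hc : ∀ i, μ[X i] = c) :
    ∫ ω, 1 / (Fintype.card ι : ℝ) * ∑ i, X i ω ∂μ = c := by
  rw [integral_const_mul, integral_finsetSum _ fun i _ => hX i]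
  simp [hc]

lemma variance_sampleMean (hX : ∀ i, MemLp (X i) 2 μ)
    (hindep : Pairwise fun i j => X i ⟂ᵢ[μ] X j) {v : ℝ} (hv : ∀ i, Var[X i; μ] = v) :
    Var[fun ω => 1 / (Fintype.card ι : ℝ) * ∑ i, X i ω; μ] = v / Fintype.card ι := by
  have hsum := IndepFun.variance_sum (s := Finset.univ) (fun i _ => hX i)
    fun i _ j _ hij => hindep hij
  simp only [hv, Finset.sum_const, Finset.card_univ, nsmul_eq_mul] at hsum
  rw [variance_const_mul, ← Finset.sum_fn, hsum]
  field_simp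

end SampleMean

theorem damped_inverse_bias_order_one_over_m_general
    {Ω : Type*} [MeasurableSpace Ω] (μ : Measure Ω) [IsProbabilityMeasure μ]
    (m : ℕ) (hm : 0 < m)
    (p : Fin m → Ω → ℝ)
    (hindep : iIndepFun p μ)
    (pm σ2 lam δ : ℝ) (hδ : 0 < δ)
    (hint : ∀ j, Integrable (p j) μ)
    (hmean : ∀ j, ∫ ω, p j ω ∂μ = pm)
    (hvarint : ∀ j, Integrable (fun ω => (p j ω - pm) ^ 2) μ)
    (hvar : ∀ j, ∫ ω, (p j ω - pm) ^ 2 ∂μ = σ2)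
    (hbdd : ∀ j, ∀ᵐ ω ∂μ, δ ≤ p j ω + lam) :
    0 ≤ (∫ ω, 1 / ((1 / (m : ℝ)) * ∑ j, p j ω + lam) ∂μ) - 1 / (pm + lam) ∧
    (∫ ω, 1 / ((1 / (m : ℝ)) * ∑ j, p j ω + lam) ∂μ) - 1 / (pm + lam)
      ≤ σ2 / (m * δ * (pm + lam) ^ 2) := by
  have : Nonempty (Fin m) := ⟨⟨0, hm⟩⟩
  have hL2 j : MemLp (p j) 2 μ := memLp_two_of_integrable_sub_sq (hint j).1 (hvarint j)
  have hvar' j : Var[p j; μ] = σ2 := by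
    rw [variance_eq_integral (hint j).1.aemeasurable, hmean j, hvar j]
  set pbar := fun ω => 1 / (m : ℝ) * ∑ j, p j ω
  have hpbar_L2 : MemLp pbar 2 μ := by
    simpa [pbar, Finset.sum_fn] using
      (memLp_finsetSum' _ fun j _ => hL2 j).const_mul (1 / m : ℝ)
  set B := fun ω => pbar ω + lam
  have hB_L2 : MemLp B 2 μ := hpbar_L2.add (memLp_const lam)
  have hB_mean : μ[B] = pm + lam := by
    rw [integral_add (hpbar_L2.integrable one_le_two) (integrable_const lam)]
    simpa [pbar] using integral_sampleMean hint hmean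
  have hB_var : Var[B; μ] = σ2 / m := by
    rw [variance_add_const hpbar_L2.1]
    simpa [pbar] using variance_sampleMean hL2 (fun i j hij => hindep.indepFun hij) hvar'
  have hB_ge : ∀ᵐ ω ∂μ, δ ≤ B ω := by
    filter_upwards [ae_all_iff.2 hbdd] with ω hω
    simpa [B, pbar] using le_one_div_card_mul_sum fun j => sub_le_iff_le_add.2 (hω j)
  rw [← hB_mean]
  refine ⟨sub_nonneg.2 (one_div_integral_le_integral_one_div hB_L2 hδ hB_ge), ?_⟩
  calc _ ≤ Var[B; μ] / (δ * μ[B] ^ 2) :=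
        integral_one_div_sub_one_div_integral_le hB_L2 hδ hB_ge
    _ = _ := by rw [hB_var, div_div, mul_assoc]

/-- **Upward bias of the uncorrected damped inverse, of order `1/m`.**
For i.i.d. `p_1, …, p_m` with mean `pm` and variance `σ2`, with `p_j + lam ≥ δ > 0`
almost surely, the damped inverse of the sample mean satisfies
`0 ≤ E[1/(p̄ + lam)] − 1/(pm + lam) ≤ σ2 / (m · δ · (pm + lam)²)`. -/
theorem damped_inverse_bias_order_one_over_m
    {Ω : Type*} [MeasurableSpace Ω] (μ : Measure Ω) [IsProbabilityMeasure μ]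
    (m : ℕ) (hm : 0 < m)
    (p : Fin m → Ω → ℝ)
    (hmeas : ∀ j, Measurable (p j))
    (hindep : iIndepFun p μ)
    (hident : ∀ i j, IdentDistrib (p i) (p j) μ μ)
    (pm σ2 lam δ : ℝ) (hδ : 0 < δ)
    (hint : ∀ j, Integrable (p j) μ)
    (hmean : ∀ j, ∫ ω, p j ω ∂μ = pm)
    (hvarint : ∀ j, Integrable (fun ω => (p j ω - pm) ^ 2) μ)
    (hvar : ∀ j, ∫ ω, (p j ω - pm) ^ 2 ∂μ = σ2)
    (hbdd : ∀ j, ∀ᵐ ω ∂μ, δ ≤ p j ω + lam) :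
    0 ≤ (∫ ω, 1 / ((1 / (m : ℝ)) * ∑ j, p j ω + lam) ∂μ) - 1 / (pm + lam) ∧
    (∫ ω, 1 / ((1 / (m : ℝ)) * ∑ j, p j ω + lam) ∂μ) - 1 / (pm + lam)
      ≤ σ2 / (m * δ * (pm + lam) ^ 2) :=
  damped_inverse_bias_order_one_over_m_general μ m hm p hindep pm σ2 lam δ hδ hint hmean hvarint
    hvar hbdd
end

section
/- (Nonconvex stationarity bound.) Let (Ω, F, P) be a probability space with filtration (F_t)_{t≥0}, and let f : ℝ^d → ℝ be differentiable with L-Lipschitz gradient (L > 0) and bounded below by f⋆. Fix constants 0 < μ_H ≤ M_H, 0 ≤ ρ < 1, σ ≥ 0, and a step size η with 0 < η ≤ μ_H(1−ρ) / (L (M_H + ρ μ_H)²). Let θ_0 ∈ ℝ^d be deterministic and let (θ_t) and (û_t) be random sequences in ℝ^d with θ_t F_t-measurable, û_t F_{t+1}-measurable and square-integrable, and θ_{t+1} = θ_t − η û_t. Suppose that for every t, almost surely there exists an F_t-measurable random symmetric d×d matrix H_t with μ_H I ⪯ H_t ⪯ M_H I such that ‖E[û_t | F_t] − H_t ∇f(θ_t)‖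 ≤ ρ μ_H ‖∇f(θ_t)‖, and E[‖û_t − E[û_t | F_t]‖² | F_t] ≤ σ². Then for every T ≥ 1, (1/T) Σ_{t=0}^{T−1} E[‖∇f(θ_t)‖²] ≤ 2 (f(θ_0) − f⋆) / (η T μ_H (1−ρ)) + L η σ² / (μ_H (1−ρ)). -/
/-
Smoothness gives, along every sample path, the descent inequality
`f (θ - η u) ≤ f θ - η ⟪∇f θ, u⟫ + L/2 η² ‖u‖²`. In expectation, the tower property replaces `u_t`
by its conditional mean `E[u_t | F_t]` in the inner product, and the bias condition makes that at
least `μ_H (1 - ρ) ‖∇f θ_t‖²`; the orthogonal splitting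
`E‖u‖² = E‖E[u | F]‖² + E‖u - E[u | F]‖²` bounds the second moment by
`(M_H + ρ μ_H)² E‖∇f θ_t‖² + σ²`. The step-size condition keeps the quadratic term below half of the
descent term, and summing over `t` telescopes `f` down to `f⋆`.
-/

open MeasureTheory
open scoped RealInnerProductSpace

section Descent

variable {E : Type*} [NormedAddCommGroup E] [InnerProductSpace ℝ E] [CompleteSpace E]
  {f : E → ℝ} {L : ℝ}

theorem Differentiable.apply_add_le_of_lipschitz_gradient (hf : Differentiable ℝ f)
    (hlip : ∀ x y, ‖gradient f x - gradient f y‖ ≤ L * ‖x - y‖) (x v : E) :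
    f (x + v) ≤ f x + ⟪gradient f x, v⟫ + L / 2 * ‖v‖ ^ 2 := by
  set φ : ℝ → ℝ := fun s => f (x + s • v) - s * ⟪gradient f x, v⟫ - L / 2 * s ^ 2 * ‖v‖ ^ 2
  have hφ : ∀ s, HasDerivAt φ
      (⟪gradient f (x + s • v) - gradient f x, v⟫ - L * s * ‖v‖ ^ 2) s := by
    intro s
    have hline : HasDerivAt (fun s : ℝ => x + s • v) v s := by
      simpa using ((hasDerivAt_id s).smul_const v).const_add x
    have hfx := ((hf _).hasGradientAt.hasFDerivAt).comp_hasDerivAt s hline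
    refine ((hfx.sub ((hasDerivAt_id s).mul_const ⟪gradient f x, v⟫)).sub
      (((hasDerivAt_pow 2 s).const_mul (L / 2)).mul_const (‖v‖ ^ 2))).congr_deriv ?_
    rw [InnerProductSpace.toDual_apply_apply, inner_sub_left]
    ring
  have hanti : AntitoneOn φ (Set.Icc 0 1) := by
    refine antitoneOn_of_hasDerivWithinAt_nonpos (convex_Icc 0 1)
      (fun s _ => (hφ s).continuousAt.continuousWithinAt) (fun s _ => (hφ s).hasDerivWithinAt)
      fun s hs => ?_
    rw [interior_Icc] at hs
    have : ⟪gradient f (x + s • v) - gradient f x, v⟫ ≤ L * s * ‖v‖ ^ 2 :=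
      calc _ ≤ ‖gradient f (x + s • v) - gradient f x‖ * ‖v‖ := real_inner_le_norm _ _
        _ ≤ L * ‖s • v‖ * ‖v‖ := by
          gcongr
          simpa using hlip (x + s • v) x
        _ = L * s * ‖v‖ ^ 2 := by rw [norm_smul, Real.norm_of_nonneg hs.1.le]; ring
    linarith
  have h01 := hanti (by simp) (by simp) zero_le_one
  norm_num only [φ, zero_smul, one_smul, add_zero] at h01
  linarith

theorem Differentiable.apply_le_sum_of_lipschitz_gradient (hf : Differentiable ℝ f)
    (hlip : ∀ x y, ‖gradient f x - gradient f y‖ ≤ L * ‖x - y‖) {x v : ℕ → E} {η : ℝ}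
    (hx : ∀ t, x (t + 1) = x t - η • v t) (T : ℕ) :
    f (x T) ≤ f (x 0) +
      ∑ t ∈ Finset.range T, (-η * ⟪gradient f (x t), v t⟫ + L / 2 * η ^ 2 * ‖v t‖ ^ 2) := by
  induction T with
  | zero => simp
  | succ T ih =>
    have step := hf.apply_add_le_of_lipschitz_gradient hlip (x T) (-(η • v T))
    rw [← sub_eq_add_neg, ← hx, inner_neg_right, real_inner_smul_right, norm_neg, norm_smul,
      mul_pow, Real.norm_eq_abs, sq_abs] at step
    rw [Finset.sum_range_succ]
    linarith

end Descent

section Preconditioner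

variable {E : Type*} [NormedAddCommGroup E] [InnerProductSpace ℝ E] {B : E →ₗ[ℝ] E}
  {a M ρ : ℝ} {g w : E}

theorem LinearMap.IsSymmetric.norm_apply_le_of_abs_inner_le [FiniteDimensional ℝ E]
    (hB : B.IsSymmetric) (hM : 0 ≤ M) (h : ∀ x, |⟪x, B x⟫| ≤ M * ‖x‖ ^ 2) (y : E) :
    ‖B y‖ ≤ M * ‖y‖ := by
  set T := LinearMap.toContinuousLinearMap B
  have hT : ‖T‖ ≤ M := by
    rw [T.norm_eq_iSup_rayleighQuotient hB]
    refine ciSup_le fun x => ?_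
    rcases eq_or_ne x 0 with rfl | hx
    · simpa using hM
    rw [ContinuousLinearMap.rayleighQuotient, ContinuousLinearMap.reApplyInnerSelf_apply, abs_div,
      abs_sq, div_le_iff₀ (by positivity), RCLike.re_to_real, real_inner_comm]
    exact h x
  exact (T.le_opNorm y).trans (by gcongr)

theorem LinearMap.IsSymmetric.norm_le_of_norm_sub_apply_le [FiniteDimensional ℝ E]
    (hB : B.IsSymmetric) (ha : 0 ≤ a) (hM : 0 ≤ M)
    (hspec : ∀ x, a * ‖x‖ ^ 2 ≤ ⟪x, B x⟫ ∧ ⟪x, B x⟫ ≤ M * ‖x‖ ^ 2)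
    (hw : ‖w - B g‖ ≤ ρ * a * ‖g‖) : ‖w‖ ≤ (M + ρ * a) * ‖g‖ := by
  have hBg : ‖B g‖ ≤ M * ‖g‖ := hB.norm_apply_le_of_abs_inner_le hM (fun x => abs_le.2
    ⟨by nlinarith [hspec x, sq_nonneg ‖x‖], (hspec x).2⟩) g
  calc ‖w‖ ≤ ‖B g‖ + ‖w - B g‖ := norm_le_norm_add_norm_sub' w (B g)
    _ ≤ (M + ρ * a) * ‖g‖ := by linarith

theorem mul_norm_sq_le_inner_of_norm_sub_apply_le (hspec : a * ‖g‖ ^ 2 ≤ ⟪g, B g⟫)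
    (hw : ‖w - B g‖ ≤ ρ * a * ‖g‖) : a * (1 - ρ) * ‖g‖ ^ 2 ≤ ⟪g, w⟫ := by
  have h := neg_le_of_abs_le (abs_real_inner_le_norm g (w - B g))
  have := mul_le_mul_of_nonneg_left hw (norm_nonneg g)
  rw [inner_sub_right] at h
  nlinarith

end Preconditioner

theorem LipschitzWith.memLp_comp {Ω E F : Type*} {m0 : MeasurableSpace Ω} {μ : Measure Ω}
    [IsFiniteMeasure μ] [NormedAddCommGroup E] [NormedAddCommGroup F] {K : NNReal} {φ : E → F}
    (hφ : LipschitzWith K φ) {p : ENNReal} {X : Ω → E} (hX : MemLp X p μ) :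
    MemLp (fun ω => φ (X ω)) p μ := by
  convert ((hφ.sub (LipschitzWith.const (φ 0))).comp_memLp (sub_self _) hX).add
    (memLp_const (φ 0)) using 1
  ext ω
  simp

theorem MeasureTheory.memLp_of_eq_sub_smul {Ω E : Type*} {m0 : MeasurableSpace Ω}
    {μ : Measure Ω} [NormedAddCommGroup E] [NormedSpace ℝ E] {p : ENNReal} {x v : ℕ → Ω → E}
    {η : ℝ} (hx₀ : MemLp (x 0) p μ) (hx : ∀ t ω, x (t + 1) ω = x t ω - η • v t ω)
    (hv : ∀ t, MemLp (v t) p μ) (t : ℕ) : MemLp (x t) p μ := by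
  induction t with
  | zero => exact hx₀
  | succ t ih => exact funext (hx t) ▸ ih.sub ((hv t).const_smul η)

namespace MeasureTheory

variable {Ω E : Type*} {m m0 : MeasurableSpace Ω} {μ : Measure Ω}
  [NormedAddCommGroup E] [InnerProductSpace ℝ E]

theorem MemLp.integrable_inner {f g : Ω → E} (hf : MemLp f 2 μ) (hg : MemLp g 2 μ) :
    Integrable (fun ω => ⟪f ω, g ω⟫) μ :=
  memLp_one_iff_integrable.1 ((innerSL ℝ).memLp_of_bilin 1 hf hg)

variable [CompleteSpace E] [IsFiniteMeasure μ]

theorem integral_inner_condExp (hm : m ≤ m0) {g u : Ω → E} (hgm : StronglyMeasurable[m] g)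
    (hg : MemLp g 2 μ) (hu : MemLp u 2 μ) :
    ∫ ω, ⟪g ω, μ[u|m] ω⟫ ∂μ = ∫ ω, ⟪g ω, u ω⟫ ∂μ := by
  have hgm' : AEStronglyMeasurable[m] (hg.toLp g) μ :=
    hgm.aestronglyMeasurable.congr hg.coeFn_toLp.symm
  -- `condExpL2` projects orthogonally onto the `m`-measurable part of `L²`, which contains `g`.
  have key := inner_condExpL2_eq_inner_fun (𝕜 := ℝ) hm (hu.toLp u) (hg.toLp g) hgm'
  rw [L2.inner_def, L2.inner_def] at key
  calc ∫ ω, ⟪g ω, μ[u|m] ω⟫ ∂μ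
      = ∫ ω, ⟪(condExpL2 E ℝ hm (hu.toLp u) : Ω →₂[μ] E) ω, hg.toLp g ω⟫ ∂μ := by
        refine integral_congr_ae ?_
        filter_upwards [hu.condExpL2_ae_eq_condExp (𝕜 := ℝ) hm, hg.coeFn_toLp] with ω h1 h2
        rw [h1, h2, real_inner_comm]
    _ = ∫ ω, ⟪hu.toLp u ω, hg.toLp g ω⟫ ∂μ := key
    _ = ∫ ω, ⟪g ω, u ω⟫ ∂μ := by
        refine integral_congr_ae ?_
        filter_upwards [hu.coeFn_toLp, hg.coeFn_toLp] with ω h1 h2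
        rw [h1, h2, real_inner_comm]

theorem integral_norm_sq_eq_condExp_add (hm : m ≤ m0) {u : Ω → E} (hu : MemLp u 2 μ) :
    ∫ ω, ‖u ω‖ ^ 2 ∂μ = ∫ ω, ‖μ[u|m] ω‖ ^ 2 ∂μ + ∫ ω, ‖u ω - μ[u|m] ω‖ ^ 2 ∂μ := by
  have hc : MemLp (μ[u|m]) 2 μ := hu.condExp one_le_two
  have hd : MemLp (fun ω => u ω - μ[u|m] ω) 2 μ := hu.sub hc
  have horth : ∫ ω, ⟪μ[u|m] ω, u ω - μ[u|m] ω⟫ ∂μ = 0 := by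
    simp_rw [inner_sub_right]
    rw [integral_sub (hc.integrable_inner hu) (hc.integrable_inner hc),
      integral_inner_condExp hm stronglyMeasurable_condExp hc hu, sub_self]
  have hi := (hc.integrable_inner hd).const_mul 2
  calc ∫ ω, ‖u ω‖ ^ 2 ∂μ
      = ∫ ω, (‖μ[u|m] ω‖ ^ 2 + 2 * ⟪μ[u|m] ω, u ω - μ[u|m] ω⟫ + ‖u ω - μ[u|m] ω‖ ^ 2) ∂μ := by
        congr with ω
        rw [← norm_add_sq_real, add_sub_cancel]
    _ = _ := by
        rw [integral_add ?_ (hd.integrable_norm_pow two_ne_zero),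
          integral_add (hc.integrable_norm_pow two_ne_zero) hi, integral_const_mul, horth,
          mul_zero, add_zero]
        exact (hc.integrable_norm_pow two_ne_zero).add hi

theorem mul_integral_norm_sq_le_integral_inner (hm : m ≤ m0) {g u : Ω → E}
    (hgm : StronglyMeasurable[m] g) (hg : MemLp g 2 μ) (hu : MemLp u 2 μ) {a : ℝ}
    (h : ∀ᵐ ω ∂μ, a * ‖g ω‖ ^ 2 ≤ ⟪g ω, μ[u|m] ω⟫) :
    a * ∫ ω, ‖g ω‖ ^ 2 ∂μ ≤ ∫ ω, ⟪g ω, u ω⟫ ∂μ := by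
  rw [← integral_inner_condExp hm hgm hg hu, ← integral_const_mul]
  exact integral_mono_ae ((hg.integrable_norm_pow two_ne_zero).const_mul a)
    (hg.integrable_inner (hu.condExp one_le_two)) h

variable [IsProbabilityMeasure μ]

theorem integral_le_of_ae_condExp_le (hm : m ≤ m0) {X : Ω → ℝ} {c : ℝ}
    (h : ∀ᵐ ω ∂μ, μ[X|m] ω ≤ c) : ∫ ω, X ω ∂μ ≤ c := by
  rw [← integral_condExp hm]
  simpa using integral_mono_ae integrable_condExp (integrable_const c) h

theorem integral_norm_sq_le_of_condExp_le (hm : m ≤ m0) {g u : Ω → E} (hg : MemLp g 2 μ)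
    (hu : MemLp u 2 μ) {c s : ℝ} (hmean : ∀ᵐ ω ∂μ, ‖μ[u|m] ω‖ ≤ c * ‖g ω‖)
    (hvar : ∀ᵐ ω ∂μ, μ[fun ω => ‖u ω - μ[u|m] ω‖ ^ 2|m] ω ≤ s) :
    ∫ ω, ‖u ω‖ ^ 2 ∂μ ≤ c ^ 2 * ∫ ω, ‖g ω‖ ^ 2 ∂μ + s := by
  have hmean_sq : ∫ ω, ‖μ[u|m] ω‖ ^ 2 ∂μ ≤ c ^ 2 * ∫ ω, ‖g ω‖ ^ 2 ∂μ := by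
    rw [← integral_const_mul]
    refine integral_mono_ae ((hu.condExp one_le_two).integrable_norm_pow two_ne_zero)
      ((hg.integrable_norm_pow two_ne_zero).const_mul _) ?_
    filter_upwards [hmean] with ω hω
    rw [← mul_pow]
    exact pow_le_pow_left₀ (norm_nonneg _) hω 2
  rw [integral_norm_sq_eq_condExp_add hm hu]
  exact add_le_add hmean_sq (integral_le_of_ae_condExp_le hm hvar)

theorem integral_descent_increment_le (hm : m ≤ m0) {g u : Ω → E}
    (hgm : StronglyMeasurable[m] g) (hg : MemLp g 2 μ) (hu : MemLp u 2 μ) {a c s L η : ℝ}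
    (hbias : ∀ᵐ ω ∂μ, ‖μ[u|m] ω‖ ≤ c * ‖g ω‖ ∧ a * ‖g ω‖ ^ 2 ≤ ⟪g ω, μ[u|m] ω⟫)
    (hvar : ∀ᵐ ω ∂μ, μ[fun ω => ‖u ω - μ[u|m] ω‖ ^ 2|m] ω ≤ s)
    (hL : 0 ≤ L) (hη : 0 ≤ η) (hstep : L * η * c ^ 2 ≤ a) :
    ∫ ω, (-η * ⟪g ω, u ω⟫ + L / 2 * η ^ 2 * ‖u ω‖ ^ 2) ∂μ
      ≤ -(η * a / 2) * ∫ ω, ‖g ω‖ ^ 2 ∂μ + L * η ^ 2 * s / 2 := by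
  have hinner := mul_integral_norm_sq_le_integral_inner hm hgm hg hu (hbias.mono fun _ h => h.2)
  have hsq := integral_norm_sq_le_of_condExp_le hm hg hu (hbias.mono fun _ h => h.1) hvar
  have hG : 0 ≤ ∫ ω, ‖g ω‖ ^ 2 ∂μ := integral_nonneg fun _ => sq_nonneg _
  rw [integral_add ((hg.integrable_inner hu).const_mul _)
    ((hu.integrable_norm_pow two_ne_zero).const_mul _), integral_const_mul, integral_const_mul]
  have h1 := mul_le_mul_of_nonneg_left hinner hη
  have h2 := mul_le_mul_of_nonneg_left hsq (by positivity : 0 ≤ L / 2 * η ^ 2)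
  have h3 := mul_le_mul_of_nonneg_left (mul_le_mul_of_nonneg_right hstep hG)
    (by positivity : 0 ≤ η / 2)
  linarith

end MeasureTheory

theorem Differentiable.le_add_sum_integral_of_lipschitz_gradient {Ω E : Type*}
    {m0 : MeasurableSpace Ω} {μ : Measure Ω} [IsProbabilityMeasure μ] [NormedAddCommGroup E]
    [InnerProductSpace ℝ E] [CompleteSpace E] {f : E → ℝ} (hf : Differentiable ℝ f) {L : ℝ}
    (hlip : ∀ x y, ‖gradient f x - gradient f y‖ ≤ L * ‖x - y‖) {fstar : ℝ}
    (hbdd : ∀ x, fstar ≤ f x) {x v : ℕ → Ω → E} {x₀ : E} {η : ℝ} (hx₀ : ∀ ω, x 0 ω = x₀)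
    (hx : ∀ t ω, x (t + 1) ω = x t ω - η • v t ω)
    (hg : ∀ t, MemLp (fun ω => gradient f (x t ω)) 2 μ) (hv : ∀ t, MemLp (v t) 2 μ) (T : ℕ) :
    fstar ≤ f x₀ + ∑ t ∈ Finset.range T,
      ∫ ω, (-η * ⟪gradient f (x t ω), v t ω⟫ + L / 2 * η ^ 2 * ‖v t ω‖ ^ 2) ∂μ := by
  have hint : ∀ t, Integrable
      (fun ω => -η * ⟪gradient f (x t ω), v t ω⟫ + L / 2 * η ^ 2 * ‖v t ω‖ ^ 2) μ := fun t =>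
    (((hg t).integrable_inner (hv t)).const_mul _).add
      (((hv t).integrable_norm_pow two_ne_zero).const_mul _)
  have hsum := integrable_finsetSum (Finset.range T) fun t _ => hint t
  calc fstar = ∫ _, fstar ∂μ := by simp
    _ ≤ ∫ ω, (f x₀ + ∑ t ∈ Finset.range T,
          (-η * ⟪gradient f (x t ω), v t ω⟫ + L / 2 * η ^ 2 * ‖v t ω‖ ^ 2)) ∂μ := by
      refine integral_mono (integrable_const _) ((integrable_const _).add hsum) fun ω => ?_
      have := hf.apply_le_sum_of_lipschitz_gradient hlip (x := fun t => x t ω) (hx · ω) T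
      rw [hx₀] at this
      exact (hbdd _).trans this
    _ = _ := by
      rw [integral_add (integrable_const _) hsum, integral_finsetSum _ fun t _ => hint t]
      simp

theorem nonconvex_stationarity_bound_general
    {Ω : Type*} {m0 : MeasurableSpace Ω} (μ : Measure Ω) [IsProbabilityMeasure μ]
    (F : Filtration ℕ m0)
    {d : ℕ} (f : EuclideanSpace ℝ (Fin d) → ℝ)
    (L : ℝ) (hL : 0 < L)
    (hdiff : Differentiable ℝ f)
    (hlip : ∀ x y, ‖gradient f x - gradient f y‖ ≤ L * ‖x - y‖)
    (fstar : ℝ) (hbdd : ∀ x, fstar ≤ f x)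
    (muH MH ρ σ η : ℝ)
    (hmuH : 0 < muH) (hMH : muH ≤ MH)
    (hρ0 : 0 ≤ ρ) (hρ1 : ρ < 1)
    (hη0 : 0 < η) (hη : η ≤ muH * (1 - ρ) / (L * (MH + ρ * muH) ^ 2))
    (θ0 : EuclideanSpace ℝ (Fin d))
    (θ u : ℕ → Ω → EuclideanSpace ℝ (Fin d))
    (hθ0 : θ 0 = fun _ => θ0)
    (hθmeas : ∀ t, StronglyMeasurable[F t] (θ t))
    (huL2 : ∀ t, MemLp (u t) 2 μ)
    (hrec : ∀ t ω, θ (t + 1) ω = θ t ω - η • u t ω)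
    (hbias : ∀ t, ∃ H : Ω → Matrix (Fin d) (Fin d) ℝ,
      (∀ i j, Measurable[F t] fun ω => H ω i j) ∧
      ∀ᵐ ω ∂μ,
        (H ω).IsSymm ∧
        (∀ x : EuclideanSpace ℝ (Fin d),
          muH * ‖x‖ ^ 2 ≤ ⟪x, Matrix.toEuclideanLin (H ω) x⟫ ∧
          ⟪x, Matrix.toEuclideanLin (H ω) x⟫ ≤ MH * ‖x‖ ^ 2) ∧
        ‖(μ[u t | F t]) ω - Matrix.toEuclideanLin (H ω) (gradient f (θ t ω))‖
          ≤ ρ * muH * ‖gradient f (θ t ω)‖)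
    (hvar : ∀ t, ∀ᵐ ω ∂μ,
      (μ[(fun ω' => ‖u t ω' - (μ[u t | F t]) ω'‖ ^ 2) | F t]) ω ≤ σ ^ 2) :
    ∀ T : ℕ, 1 ≤ T →
      (1 / (T : ℝ)) * ∑ t ∈ Finset.range T, ∫ ω, ‖gradient f (θ t ω)‖ ^ 2 ∂μ
        ≤ 2 * (f θ0 - fstar) / (η * T * muH * (1 - ρ))
          + L * η * σ ^ 2 / (muH * (1 - ρ)) := by
  intro T hT
  have hgrad : LipschitzWith (Real.toNNReal L) (gradient f) :=
    LipschitzWith.of_dist_le_mul fun x y => by simpa [dist_eq_norm, hL.le] using hlip x y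
  have h1ρ : 1 - ρ ≠ 0 := (sub_pos.2 hρ1).ne'
  have hstep : L * η * (MH + ρ * muH) ^ 2 ≤ muH * (1 - ρ) := by
    have : 0 < MH + ρ * muH := by nlinarith
    rw [le_div_iff₀ (by positivity)] at hη
    linarith
  have hθL2 := memLp_of_eq_sub_smul (hθ0 ▸ memLp_const θ0) hrec huL2
  have hincr : ∀ t, ∫ ω, (-η * ⟪gradient f (θ t ω), u t ω⟫ + L / 2 * η ^ 2 * ‖u t ω‖ ^ 2) ∂μ
      ≤ -(η * (muH * (1 - ρ)) / 2) * ∫ ω, ‖gradient f (θ t ω)‖ ^ 2 ∂μ + L * η ^ 2 * σ ^ 2 / 2 := by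
    intro t
    obtain ⟨H, -, hH⟩ := hbias t
    refine integral_descent_increment_le (F.le t)
      (hgrad.continuous.comp_stronglyMeasurable (hθmeas t)) (hgrad.memLp_comp (hθL2 t))
      (huL2 t) (hH.mono fun ω ⟨hsymm, hspec, hω⟩ => ⟨?_, ?_⟩) (hvar t) hL.le hη0.le hstep
    · exact (Matrix.isSymmetric_toEuclideanLin_iff.2 (Matrix.isHermitian_iff_isSymm.2 hsymm))
        |>.norm_le_of_norm_sub_apply_le hmuH.le (hmuH.le.trans hMH) hspec hω
    · exact mul_norm_sq_le_inner_of_norm_sub_apply_le (hspec _).1 hω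
  have key := (hdiff.le_add_sum_integral_of_lipschitz_gradient hlip hbdd (congrFun hθ0) hrec
    (fun t => hgrad.memLp_comp (hθL2 t)) huL2 T).trans
    (add_le_add le_rfl (Finset.sum_le_sum fun t _ => hincr t))
  rw [Finset.sum_add_distrib, ← Finset.mul_sum, Finset.sum_const, Finset.card_range,
    nsmul_eq_mul] at key
  set S := ∑ t ∈ Finset.range T, ∫ ω, ‖gradient f (θ t ω)‖ ^ 2 ∂μ
  have hT' : (0 : ℝ) < T := by exact_mod_cast hT
  calc 1 / (T : ℝ) * S = η * (muH * (1 - ρ)) * S / (η * T * muH * (1 - ρ)) := by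
        field_simp
    _ ≤ (2 * (f θ0 - fstar) + T * (L * η ^ 2 * σ ^ 2)) / (η * T * muH * (1 - ρ)) := by
        gcongr
        linarith
    _ = _ := by
        field_simp

/-- **Nonconvex stationarity bound for biased preconditioned stochastic updates.**
Let `f` be differentiable with `L`-Lipschitz gradient and bounded below by `fstar`.
With step size `0 < η ≤ μ_H(1−ρ)/(L(M_H+ρμ_H)²)`, updates `θ_{t+1} = θ_t − η û_t`
adapted to a filtration `F`, conditional-mean bias dominated by an `F_t`-measurable
symmetric preconditioner `H_t` with `μ_H I ⪯ H_t ⪯ M_H I` via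
`‖E[û_t|F_t] − H_t ∇f(θ_t)‖ ≤ ρ μ_H ‖∇f(θ_t)‖`, and conditional variance at most `σ²`,
the average squared gradient norm satisfies the stated bound. -/
theorem nonconvex_stationarity_bound
    {Ω : Type*} {m0 : MeasurableSpace Ω} (μ : Measure Ω) [IsProbabilityMeasure μ]
    (F : Filtration ℕ m0)
    {d : ℕ} (f : EuclideanSpace ℝ (Fin d) → ℝ)
    (L : ℝ) (hL : 0 < L)
    (hdiff : Differentiable ℝ f)
    (hlip : ∀ x y, ‖gradient f x - gradient f y‖ ≤ L * ‖x - y‖)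
    (fstar : ℝ) (hbdd : ∀ x, fstar ≤ f x)
    (muH MH ρ σ η : ℝ)
    (hmuH : 0 < muH) (hMH : muH ≤ MH)
    (hρ0 : 0 ≤ ρ) (hρ1 : ρ < 1) (hσ : 0 ≤ σ)
    (hη0 : 0 < η) (hη : η ≤ muH * (1 - ρ) / (L * (MH + ρ * muH) ^ 2))
    (θ0 : EuclideanSpace ℝ (Fin d))
    (θ u : ℕ → Ω → EuclideanSpace ℝ (Fin d))
    (hθ0 : θ 0 = fun _ => θ0)
    (hθmeas : ∀ t, StronglyMeasurable[F t] (θ t))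
    (humeas : ∀ t, StronglyMeasurable[F (t + 1)] (u t))
    (huL2 : ∀ t, MemLp (u t) 2 μ)
    (hrec : ∀ t ω, θ (t + 1) ω = θ t ω - η • u t ω)
    (hbias : ∀ t, ∃ H : Ω → Matrix (Fin d) (Fin d) ℝ,
      (∀ i j, Measurable[F t] fun ω => H ω i j) ∧
      ∀ᵐ ω ∂μ,
        (H ω).IsSymm ∧
        (∀ x : EuclideanSpace ℝ (Fin d),
          muH * ‖x‖ ^ 2 ≤ ⟪x, Matrix.toEuclideanLin (H ω) x⟫ ∧
          ⟪x, Matrix.toEuclideanLin (H ω) x⟫ ≤ MH * ‖x‖ ^ 2) ∧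
        ‖(μ[u t | F t]) ω - Matrix.toEuclideanLin (H ω) (gradient f (θ t ω))‖
          ≤ ρ * muH * ‖gradient f (θ t ω)‖)
    (hvar : ∀ t, ∀ᵐ ω ∂μ,
      (μ[(fun ω' => ‖u t ω' - (μ[u t | F t]) ω'‖ ^ 2) | F t]) ω ≤ σ ^ 2) :
    ∀ T : ℕ, 1 ≤ T →
      (1 / (T : ℝ)) * ∑ t ∈ Finset.range T, ∫ ω, ‖gradient f (θ t ω)‖ ^ 2 ∂μ
        ≤ 2 * (f θ0 - fstar) / (η * T * muH * (1 - ρ))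
          + L * η * σ ^ 2 / (muH * (1 - ρ)) :=
  nonconvex_stationarity_bound_general μ F f L hL hdiff hlip fstar hbdd muH MH ρ σ η hmuH hMH hρ0
    hρ1 hη0 hη θ0 θ u hθ0 hθmeas huL2 hrec hbias hvar
end
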